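/- arXiv:2108.07446 — 2 statements merged into one kernel-verified Lean document; each statement's English description precedes it below -/
import Mathlib

section
/- For any finite simple undirected graph G on N nodes, the quantity ∑_{e∈G} |A_e||B_e| is bounded above and below by constant multiples of ∑_{i=1}^N |G_i|^2 |G_{i,2}| + ∑_{i=1}^N |G_{i,2}|^2. -/
/-! For an edge `e = s(a, b)` we have `A_e = G_a ∪ G_b` and `B_e = G_{a,2} ∪ G_{b,2}`, so
`|A_e| |B_e|` agrees up to a factor `4` with the weight `(d_a + d_b) (g_a + g_b)`, where
`d = |G_·|` and `g = |G_{·,2}|`. Splitting this weight over the two darts of the edge gives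
`∑_e (d_a + d_b) (g_a + g_b) = ∑_a (d_a² + D_a) g_a` with `D_a = ∑_{b ~ a} d_b`. Finally
`g_a ≤ D_a ≤ 2 g_a`: `D_a` counts the pairs (neighbour `b` of `a`, edge of `G_{a,2}` through `b`),
and every edge of `G_{a,2}` contains one or two neighbours of `a`. This gives `c = 1/4`, `C = 2`. -/

open Finset SimpleGraph

/-- `Ae G e`: the set of edges of `G` sharing at least one node with the edge `e`
(this is `G_{e⁺} ∪ G_{e⁻}`). -/
def Ae {N : ℕ} (G : SimpleGraph (Fin N)) [DecidableRel G.Adj] (e : Sym2 (Fin N)) :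
    Finset (Sym2 (Fin N)) :=
  G.edgeFinset.filter fun f => ∃ v, v ∈ e ∧ v ∈ f

/-- `Be G e`: the set of edges of `G` with at least one endpoint in the neighborhood of
an endpoint of `e` (this is `B_e = G_{e⁺,2} ∪ G_{e⁻,2}`). -/
def Be {N : ℕ} (G : SimpleGraph (Fin N)) [DecidableRel G.Adj] (e : Sym2 (Fin N)) :
    Finset (Sym2 (Fin N)) :=
  G.edgeFinset.filter fun f => ∃ v w : Fin N, v ∈ e ∧ G.Adj v w ∧ w ∈ f

/-- `Gi2 G i`: the set of edges of `G` with at least one endpoint in the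
neighborhood of node `i`. -/
def Gi2 {N : ℕ} (G : SimpleGraph (Fin N)) [DecidableRel G.Adj] (i : Fin N) :
    Finset (Sym2 (Fin N)) :=
  G.edgeFinset.filter fun f => ∃ v : Fin N, v ∈ f ∧ G.Adj i v

theorem Finset.card_union_mul_card_union_le {α β : Type*} [DecidableEq α] [DecidableEq β]
    (s t : Finset α) (u v : Finset β) :
    #(s ∪ t) * #(u ∪ v) ≤ (#s + #t) * (#u + #v) :=
  Nat.mul_le_mul (card_union_le s t) (card_union_le u v)

theorem Finset.card_add_card_le_two_mul_card_union {α : Type*} [DecidableEq α]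
    (s t : Finset α) : #s + #t ≤ 2 * #(s ∪ t) := by
  rw [← card_union_add_card_inter]
  have := card_le_card (inter_subset_union : s ∩ t ⊆ s ∪ t)
  omega

theorem Finset.card_add_card_mul_card_add_card_le_four_mul {α β : Type*} [DecidableEq α]
    [DecidableEq β] (s t : Finset α) (u v : Finset β) :
    (#s + #t) * (#u + #v) ≤ 4 * (#(s ∪ t) * #(u ∪ v)) :=
  calc (#s + #t) * (#u + #v) ≤ (2 * #(s ∪ t)) * (2 * #(u ∪ v)) :=
        Nat.mul_le_mul (card_add_card_le_two_mul_card_union s t)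
          (card_add_card_le_two_mul_card_union u v)
    _ = 4 * (#(s ∪ t) * #(u ∪ v)) := by ring

namespace SimpleGraph

variable {V M : Type*} [Fintype V] [DecidableEq V] [AddCommMonoid M]
  (G : SimpleGraph V) [DecidableRel G.Adj]

theorem sum_darts_eq_sum_neighborFinset (φ : V → V → M) :
    ∑ d : G.Dart, φ d.fst d.snd = ∑ a, ∑ b ∈ G.neighborFinset a, φ a b := by
  rw [← sum_fiberwise_of_maps_to (g := fun d : G.Dart => d.fst) (t := univ)
    fun _ _ => mem_univ _]
  refine sum_congr rfl fun a _ => ?_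
  rw [dart_fst_fiber, sum_image fun _ _ _ _ h => G.dartOfNeighborSet_injective a h]
  exact (sum_subtype _ (fun _ => mem_neighborFinset ..) (φ a)).symm

theorem sum_edgeFinset_eq_sum_darts (F : Sym2 V → M) (φ : V → V → M)
    (hF : ∀ a b, G.Adj a b → F s(a, b) = φ a b + φ b a) :
    ∑ e ∈ G.edgeFinset, F e = ∑ d : G.Dart, φ d.fst d.snd := by
  rw [← sum_fiberwise_of_maps_to (g := Dart.edge) (t := G.edgeFinset)
    fun d _ => mem_edgeFinset.2 d.edge_mem]
  refine sum_congr rfl fun e he => ?_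
  induction e using Sym2.ind with
  | _ a b =>
    have hab : G.Adj a b := mem_edgeFinset.1 he
    let d : G.Dart := ⟨(a, b), hab⟩
    rw [show s(a, b) = d.edge from rfl, Dart.edge_fiber, sum_pair d.symm_ne.symm]
    exact hF a b hab

end SimpleGraph

section EdgeNeighbourhoods

variable {N : ℕ} (G : SimpleGraph (Fin N)) [DecidableRel G.Adj]

theorem Ae_mk (a b : Fin N) : Ae G s(a, b) = G.incidenceFinset a ∪ G.incidenceFinset b := by
  ext f
  simp only [Ae, incidenceFinset_eq_filter, mem_filter, mem_union, Sym2.mem_iff]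
  grind

theorem Be_mk (a b : Fin N) : Be G s(a, b) = Gi2 G a ∪ Gi2 G b := by
  ext f
  simp only [Be, Gi2, mem_filter, mem_union, Sym2.mem_iff]
  grind

theorem filter_mem_Gi2_eq_incidenceFinset {a b : Fin N} (hab : G.Adj a b) :
    {f ∈ Gi2 G a | b ∈ f} = G.incidenceFinset b := by
  ext f
  simp only [Gi2, incidenceFinset_eq_filter, mem_filter]
  grind

theorem sum_degree_neighborFinset_eq (a : Fin N) :
    ∑ b ∈ G.neighborFinset a, G.degree b =
      ∑ f ∈ Gi2 G a, #{b ∈ G.neighborFinset a | b ∈ f} :=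
  calc ∑ b ∈ G.neighborFinset a, G.degree b
      = ∑ b ∈ G.neighborFinset a, #{f ∈ Gi2 G a | b ∈ f} := sum_congr rfl fun b hb => by
        rw [filter_mem_Gi2_eq_incidenceFinset G ((mem_neighborFinset ..).1 hb),
          card_incidenceFinset_eq_degree]
    _ = _ := sum_card_bipartiteAbove_eq_sum_card_bipartiteBelow _

theorem card_Gi2_le_sum_degree (a : Fin N) :
    #(Gi2 G a) ≤ ∑ b ∈ G.neighborFinset a, G.degree b := by
  rw [sum_degree_neighborFinset_eq, card_eq_sum_ones]
  refine sum_le_sum fun f hf => card_pos.2 ?_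
  obtain ⟨-, b, hbf, hab⟩ := mem_filter.1 hf
  exact ⟨b, mem_filter.2 ⟨(mem_neighborFinset ..).2 hab, hbf⟩⟩

theorem sum_degree_le_two_mul_card_Gi2 (a : Fin N) :
    ∑ b ∈ G.neighborFinset a, G.degree b ≤ 2 * #(Gi2 G a) := by
  rw [sum_degree_neighborFinset_eq, mul_comm, ← smul_eq_mul]
  refine sum_le_card_nsmul _ _ _ fun f _ => ?_
  calc #{b ∈ G.neighborFinset a | b ∈ f} ≤ #f.toFinset := card_le_card fun b hb => by simp_all
    _ ≤ 2 := by rw [Sym2.card_toFinset]; split_ifs <;> norm_num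

def edgeWeight : Sym2 (Fin N) → ℕ :=
  Sym2.lift ⟨fun a b => (G.degree a + G.degree b) * (#(Gi2 G a) + #(Gi2 G b)),
    fun _ _ => by ring⟩

theorem edgeWeight_mk (a b : Fin N) :
    edgeWeight G s(a, b) = (G.degree a + G.degree b) * (#(Gi2 G a) + #(Gi2 G b)) :=
  rfl

theorem card_Ae_mul_card_Be_le_edgeWeight (e : Sym2 (Fin N)) :
    #(Ae G e) * #(Be G e) ≤ edgeWeight G e := by
  induction e using Sym2.ind with
  | _ a b =>
    rw [Ae_mk, Be_mk, edgeWeight_mk, ← card_incidenceFinset_eq_degree,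
      ← card_incidenceFinset_eq_degree]
    exact card_union_mul_card_union_le ..

theorem edgeWeight_le_four_mul_card_Ae_mul_card_Be (e : Sym2 (Fin N)) :
    edgeWeight G e ≤ 4 * (#(Ae G e) * #(Be G e)) := by
  induction e using Sym2.ind with
  | _ a b =>
    rw [Ae_mk, Be_mk, edgeWeight_mk, ← card_incidenceFinset_eq_degree,
      ← card_incidenceFinset_eq_degree]
    exact card_add_card_mul_card_add_card_le_four_mul ..

theorem sum_edgeWeight_eq :
    ∑ e ∈ G.edgeFinset, edgeWeight G e =
      ∑ a, (G.degree a ^ 2 + ∑ b ∈ G.neighborFinset a, G.degree b) * #(Gi2 G a) := by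
  let φ a b := (G.degree a + G.degree b) * #(Gi2 G a)
  rw [sum_edgeFinset_eq_sum_darts G _ φ fun a b _ => by rw [edgeWeight_mk]; ring,
    sum_darts_eq_sum_neighborFinset G φ]
  refine sum_congr rfl fun a _ => ?_
  rw [← sum_mul, sum_add_distrib, sum_const, card_neighborFinset_eq_degree, smul_eq_mul, sq]

theorem le_sum_edgeWeight :
    ∑ a, G.degree a ^ 2 * #(Gi2 G a) + ∑ a, #(Gi2 G a) ^ 2 ≤
      ∑ e ∈ G.edgeFinset, edgeWeight G e := by
  rw [sum_edgeWeight_eq, ← sum_add_distrib]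
  exact sum_le_sum fun a _ => by nlinarith [card_Gi2_le_sum_degree G a]

theorem sum_edgeWeight_le_two_mul :
    ∑ e ∈ G.edgeFinset, edgeWeight G e ≤
      2 * (∑ a, G.degree a ^ 2 * #(Gi2 G a) + ∑ a, #(Gi2 G a) ^ 2) := by
  rw [sum_edgeWeight_eq, ← sum_add_distrib, mul_sum]
  exact sum_le_sum fun a _ => by nlinarith [sum_degree_le_two_mul_card_Gi2 G a]

end EdgeNeighbourhoods

/-- there are universal constants `0 < c ≤ C` such that for every finite
simple graph, `∑_{e∈G} |A_e||B_e| ≍ ∑_i |G_i|² |G_{i,2}| + ∑_i |G_{i,2}|²`. -/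
theorem sum_AeBe_asymp :
    ∃ c C : ℝ, 0 < c ∧ c ≤ C ∧
      ∀ (N : ℕ) (G : SimpleGraph (Fin N)) [DecidableRel G.Adj],
        c * (∑ i : Fin N, (G.degree i : ℝ) ^ 2 * ((Gi2 G i).card : ℝ) +
              ∑ i : Fin N, ((Gi2 G i).card : ℝ) ^ 2) ≤
            ∑ e ∈ G.edgeFinset, ((Ae G e).card : ℝ) * ((Be G e).card : ℝ) ∧
        ∑ e ∈ G.edgeFinset, ((Ae G e).card : ℝ) * ((Be G e).card : ℝ) ≤
            C * (∑ i : Fin N, (G.degree i : ℝ) ^ 2 * ((Gi2 G i).card : ℝ) +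
              ∑ i : Fin N, ((Gi2 G i).card : ℝ) ^ 2) := by
  refine ⟨1 / 4, 2, by norm_num, by norm_num, fun N G _ => ?_⟩
  have lower : ∑ a, G.degree a ^ 2 * #(Gi2 G a) + ∑ a, #(Gi2 G a) ^ 2 ≤
      4 * ∑ e ∈ G.edgeFinset, #(Ae G e) * #(Be G e) := by
    rw [mul_sum]
    exact (le_sum_edgeWeight G).trans
      (sum_le_sum fun e _ => edgeWeight_le_four_mul_card_Ae_mul_card_Be G e)
  have upper : ∑ e ∈ G.edgeFinset, #(Ae G e) * #(Be G e) ≤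
      2 * (∑ a, G.degree a ^ 2 * #(Gi2 G a) + ∑ a, #(Gi2 G a) ^ 2) :=
    (sum_le_sum fun e _ => card_Ae_mul_card_Be_le_edgeWeight G e).trans
      (sum_edgeWeight_le_two_mul G)
  constructor
  · have := (Nat.cast_le (α := ℝ)).2 lower
    push_cast at this
    linarith
  · exact_mod_cast upper
end

section
/- Under the bootstrap null distribution with node labels independently 1 with probability p and 2 with probability q = 1−p, the variance of R_δ = R_1 − R_2 equals pq ∑_{i=1}^N |G_i|^2. -/
/-! Edge by edge, `1{both ends in X} - 1{no end in X} = (number of ends in X) - 1`; summed over the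
edges this gives `R₁ - R₂ = ∑ᵢ |Gᵢ| Xᵢ - |E|`, where `Xᵢ` is the indicator of node `i` being in X.
So `R_δ` is, up to a constant, a weighted sum of independent Bernoulli(p) indicators, and its
variance is `∑ᵢ |Gᵢ|² Var Xᵢ = p q ∑ᵢ |Gᵢ|²`. -/

open Finset SimpleGraph

/-- Expectation under the bootstrap null distribution: each of the `N` nodes is
independently assigned to sample X (`σ i = true`) with probability `p`. -/
noncomputable def bootExp (N : ℕ) (p : ℝ) (f : (Fin N → Bool) → ℝ) : ℝ :=
  ∑ σ : Fin N → Bool, (∏ i : Fin N, if σ i then p else 1 - p) * f σ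

/-- `R1boot G σ`: number of edges of `G` with both endpoints in sample X. -/
def R1boot {N : ℕ} (G : SimpleGraph (Fin N)) [DecidableRel G.Adj] (σ : Fin N → Bool) : ℕ :=
  (G.edgeFinset.filter fun e => ∀ v : Fin N, v ∈ e → σ v = true).card

/-- `R2boot G σ`: number of edges of `G` with both endpoints outside sample X. -/
def R2boot {N : ℕ} (G : SimpleGraph (Fin N)) [DecidableRel G.Adj] (σ : Fin N → Bool) : ℕ :=
  (G.edgeFinset.filter fun e => ∀ v : Fin N, v ∈ e → σ v = false).card

noncomputable def bootVar (N : ℕ) (p : ℝ) (f : (Fin N → Bool) → ℝ) : ℝ :=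
  bootExp N p (fun σ => f σ ^ 2) - bootExp N p f ^ 2

section bootExp

variable {N : ℕ} (p : ℝ)

theorem bootExp_prod (s : Finset (Fin N)) (f : Fin N → Bool → ℝ) :
    bootExp N p (fun σ => ∏ i ∈ s, f i (σ i)) = ∏ i ∈ s, (p * f i true + (1 - p) * f i false) := by
  have hweight (σ : Fin N → Bool) :
      (∏ i, if σ i then p else 1 - p) * ∏ i ∈ s, f i (σ i) =
        ∏ i, (if σ i then p else 1 - p) * (if i ∈ s then f i (σ i) else 1) := by
    rw [prod_mul_distrib, Fintype.prod_extend_by_one]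
  simp only [bootExp, hweight]
  rw [← Fintype.prod_sum fun i b => (if b then p else 1 - p) * (if i ∈ s then f i b else 1),
    ← Fintype.prod_extend_by_one s]
  refine prod_congr rfl fun i _ => ?_
  split_ifs <;> simp

theorem bootExp_add (f g : (Fin N → Bool) → ℝ) :
    bootExp N p (fun σ => f σ + g σ) = bootExp N p f + bootExp N p g := by
  simp only [bootExp, mul_add, sum_add_distrib]

theorem bootExp_const_mul (c : ℝ) (f : (Fin N → Bool) → ℝ) :
    bootExp N p (fun σ => c * f σ) = c * bootExp N p f := by
  simp only [bootExp, mul_sum, mul_left_comm]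

theorem bootExp_sum {ι : Type*} (s : Finset ι) (f : ι → (Fin N → Bool) → ℝ) :
    bootExp N p (fun σ => ∑ k ∈ s, f k σ) = ∑ k ∈ s, bootExp N p (f k) := by
  simp only [bootExp, mul_sum]
  exact sum_comm

theorem bootExp_const (c : ℝ) : bootExp N p (fun _ => c) = c := by
  have h := bootExp_prod p (∅ : Finset (Fin N)) fun _ _ => 1
  simp only [prod_empty] at h
  simpa [h] using bootExp_const_mul (N := N) p c fun _ => 1

theorem bootExp_indicator_mul_indicator (i j : Fin N) :
    bootExp N p (fun σ => (if σ i then 1 else 0) * (if σ j then 1 else 0)) =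
      if i = j then p else p ^ 2 := by
  split_ifs with hij
  · subst hij
    simpa using bootExp_prod p {i} fun _ b => (if b then (1 : ℝ) else 0) * (if b then 1 else 0)
  · simpa [prod_pair hij, sq] using bootExp_prod p {i, j} fun _ b => if b then (1 : ℝ) else 0

theorem bootVar_sub_const (f : (Fin N → Bool) → ℝ) (c : ℝ) :
    bootVar N p (fun σ => f σ - c) = bootVar N p f := by
  have hsq (σ : Fin N → Bool) : (f σ - c) ^ 2 = f σ ^ 2 + ((-2 * c) * f σ + c ^ 2) := by ring
  simp only [bootVar, hsq]
  simp only [sub_eq_add_neg (f _), bootExp_add, bootExp_const_mul, bootExp_const]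
  ring

theorem bootExp_weighted_indicator_sum (d : Fin N → ℝ) :
    bootExp N p (fun σ => ∑ v, d v * if σ v then 1 else 0) = p * ∑ v, d v := by
  have hX (v : Fin N) : bootExp N p (fun σ => if σ v then 1 else 0) = p := by
    simpa using bootExp_prod p {v} fun _ b => if b then (1 : ℝ) else 0
  simp only [bootExp_sum, bootExp_const_mul, hX, mul_sum, mul_comm]

theorem bootExp_sq_weighted_indicator_sum (d : Fin N → ℝ) :
    bootExp N p (fun σ => (∑ v, d v * if σ v then 1 else 0) ^ 2) =
      p ^ 2 * (∑ v, d v) ^ 2 + p * (1 - p) * ∑ v, d v ^ 2 := by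
  have hexpand (σ : Fin N → Bool) : (∑ v, d v * if σ v then (1 : ℝ) else 0) ^ 2 =
      ∑ i, ∑ j, d i * d j * ((if σ i then 1 else 0) * (if σ j then 1 else 0)) := by
    rw [sq, sum_mul_sum]
    exact sum_congr rfl fun i _ => sum_congr rfl fun j _ => by ring
  have hsplit (i j : Fin N) : d i * d j * (if i = j then p else p ^ 2) =
      p ^ 2 * (d i * d j) + if i = j then p * (1 - p) * (d i * d j) else 0 := by
    split_ifs <;> ring
  simp only [hexpand, bootExp_sum, bootExp_const_mul, bootExp_indicator_mul_indicator, hsplit,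
    sum_add_distrib, ← mul_sum, sum_ite_eq, mem_univ, if_true]
  simp only [← sum_mul, sq]

theorem bootVar_weighted_indicator_sum (d : Fin N → ℝ) :
    bootVar N p (fun σ => ∑ v, d v * if σ v then 1 else 0) = p * (1 - p) * ∑ v, d v ^ 2 := by
  rw [bootVar, bootExp_sq_weighted_indicator_sum, bootExp_weighted_indicator_sum]
  ring

end bootExp

theorem sum_edgeFinset_sum_toFinset {V M : Type*} [Fintype V] [DecidableEq V] [AddCommMonoid M]
    (G : SimpleGraph V) [DecidableRel G.Adj] (f : V → M) :
    ∑ e ∈ G.edgeFinset, ∑ v ∈ e.toFinset, f v = ∑ v, G.degree v • f v := by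
  rw [sum_comm' (t' := univ) (s' := fun v => G.incidenceFinset v) fun e v => by
    simp [mem_incidenceFinset, incidenceSet, Sym2.mem_toFinset]]
  refine sum_congr rfl fun v _ => ?_
  rw [sum_const, card_incidenceFinset_eq_degree]

theorem ite_forall_mem_true_sub_ite_forall_mem_false {V : Type*} [DecidableEq V] (σ : V → Bool)
    {e : Sym2 V} [Decidable (∀ v ∈ e, σ v = true)] [Decidable (∀ v ∈ e, σ v = false)]
    (he : ¬e.IsDiag) :
    ((if ∀ v ∈ e, σ v = true then 1 else 0 : ℝ) - if ∀ v ∈ e, σ v = false then 1 else 0) =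
      ∑ v ∈ e.toFinset, (if σ v then 1 else 0) - 1 := by
  obtain ⟨⟨u, w⟩, rfl⟩ := Sym2.mk_surjective e
  dsimp only [Function.uncurry_apply_pair] at *
  rw [Sym2.toFinset_mk_eq, sum_pair (by simpa using he)]
  simp only [Sym2.mem_iff, forall_eq_or_imp, forall_eq]
  cases σ u <;> cases σ w <;> norm_num

theorem R1boot_sub_R2boot {N : ℕ} (G : SimpleGraph (Fin N)) [DecidableRel G.Adj]
    (σ : Fin N → Bool) :
    (R1boot G σ : ℝ) - R2boot G σ =
      ∑ v, (G.degree v : ℝ) * (if σ v then 1 else 0) - #G.edgeFinset := by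
  rw [R1boot, R2boot, natCast_card_filter, natCast_card_filter, ← sum_sub_distrib,
    sum_congr rfl fun e he => ite_forall_mem_true_sub_ite_forall_mem_false σ
      (G.not_isDiag_of_mem_edgeSet (mem_edgeFinset.mp he)),
    sum_sub_distrib, sum_edgeFinset_sum_toFinset]
  simp [nsmul_eq_mul]

theorem boot_var_Rdiff_general (N : ℕ) (G : SimpleGraph (Fin N)) [DecidableRel G.Adj]
    (p : ℝ) :
    bootExp N p (fun σ => ((R1boot G σ : ℝ) - (R2boot G σ : ℝ)) ^ 2) -
        (bootExp N p (fun σ => (R1boot G σ : ℝ) - (R2boot G σ : ℝ))) ^ 2 =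
      p * (1 - p) * ∑ i : Fin N, (G.degree i : ℝ) ^ 2 := by
  change bootVar N p (fun σ => (R1boot G σ : ℝ) - R2boot G σ) = _
  simp only [R1boot_sub_R2boot]
  rw [bootVar_sub_const, bootVar_weighted_indicator_sum]

/-- under the bootstrap null distribution,
`Var(R_δ) = Var(R_1 - R_2) = p q ∑_i |G_i|²` with `q = 1 - p`. -/
theorem boot_var_Rdiff (N : ℕ) (G : SimpleGraph (Fin N)) [DecidableRel G.Adj]
    (p : ℝ) (hp0 : 0 ≤ p) (hp1 : p ≤ 1) :
    bootExp N p (fun σ => ((R1boot G σ : ℝ) - (R2boot G σ : ℝ)) ^ 2) -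
        (bootExp N p (fun σ => (R1boot G σ : ℝ) - (R2boot G σ : ℝ))) ^ 2 =
      p * (1 - p) * ∑ i : Fin N, (G.degree i : ℝ) ^ 2 :=
  boot_var_Rdiff_general N G p
end
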